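/- Let A and B be nonempty finite subsets of ℝⁿ. For every extreme point u of the convex hull of A there exists an extreme point v of the convex hull of B such that u + v is an extreme point of the convex hull of A + B = {a + b : a ∈ A, b ∈ B}, and moreover u + v cannot be written as a' + b' with a' ∈ conv(A), b' ∈ conv(B) and (a', b') ≠ (u, v). -/

import Mathlib

open scoped Pointwise

/-!
Separating an extreme point `u` of the polytope `conv A` from the hull of the other points of `A`
gives a functional `l` exposing `u`. Any extreme point `v` of the face of `conv B` on which `l` is
maximal then works: `l (a' + b') ≤ l u + l v` on `conv A + conv B` with equality only for
`a' = u`, `b' = v`, and a point of a Minkowski sum of convex sets with a unique decomposition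
into extreme points is itself extreme.
-/

open Set

section ExtremePoints

variable {𝕜 E : Type*} [Semiring 𝕜] [PartialOrder 𝕜] [AddCommMonoid E] [Module 𝕜 E]

theorem add_mem_extremePoints_add_of_unique {S T : Set E} {u v : E} (hS : Convex 𝕜 S)
    (hT : Convex 𝕜 T) (hu : u ∈ S.extremePoints 𝕜) (hv : v ∈ T.extremePoints 𝕜)
    (huniq : ∀ a ∈ S, ∀ b ∈ T, a + b = u + v → a = u ∧ b = v) :
    u + v ∈ (S + T).extremePoints 𝕜 := by
  refine ⟨add_mem_add hu.1 hv.1, ?_⟩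
  rintro _ ⟨a₁, ha₁, b₁, hb₁, rfl⟩ _ ⟨a₂, ha₂, b₂, hb₂, rfl⟩ ⟨s, t, hs, ht, hst, hsum⟩
  have hsplit : (s • a₁ + t • a₂) + (s • b₁ + t • b₂) = u + v := by
    rw [← hsum, smul_add, smul_add, add_add_add_comm]
  obtain ⟨ha, hb⟩ := huniq _ (hS ha₁ ha₂ hs.le ht.le hst) _ (hT hb₁ hb₂ hs.le ht.le hst) hsplit
  rw [hu.2 ha₁ ha₂ ⟨s, t, hs, ht, hst, ha⟩, hv.2 hb₁ hb₂ ⟨s, t, hs, ht, hst, hb⟩]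

end ExtremePoints

section LocallyConvex

variable {E : Type*} [AddCommGroup E] [Module ℝ E] [TopologicalSpace E] [T2Space E]
  [IsTopologicalAddGroup E] [ContinuousSMul ℝ E] [LocallyConvexSpace ℝ E]

theorem IsCompact.exists_mem_extremePoints_isMaxOn {K : Set E} (hK : IsCompact K)
    (hne : K.Nonempty) (l : StrongDual ℝ E) : ∃ v ∈ K.extremePoints ℝ, IsMaxOn l K v := by
  obtain ⟨x, hx, hmax⟩ := hK.exists_isMaxOn hne l.continuous.continuousOn
  have hexp : IsExposed ℝ K (l.toExposed K) := ContinuousLinearMap.toExposed.isExposed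
  obtain ⟨v, hv⟩ := (hexp.isCompact hK).extremePoints_nonempty ⟨x, hx, hmax⟩
  exact ⟨v, hexp.isExtreme.extremePoints_subset_extremePoints hv, hv.1.2⟩

theorem Set.Finite.extremePoints_convexHull_subset_exposedPoints {s : Set E} (hs : s.Finite) :
    (convexHull ℝ s).extremePoints ℝ ⊆ (convexHull ℝ s).exposedPoints ℝ := by
  intro u hu
  have hus : u ∈ s := extremePoints_convexHull_subset hu
  have hu_notMem : u ∉ convexHull ℝ (s \ {u}) := fun h =>
    ((convex_convexHull ℝ s).mem_extremePoints_iff_mem_sdiff_convexHull_sdiff.1 hu).2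
      (convexHull_mono (sdiff_subset_sdiff_left (subset_convexHull ℝ s)) h)
  obtain ⟨l, c, hlc, hcu⟩ := geometric_hahn_banach_closed_point (convex_convexHull ℝ _)
    (hs.sdiff.isCompact_convexHull ℝ).isClosed hu_notMem
  have hls : ∀ x ∈ s, x ≠ u → l x < l u := fun x hx hxu =>
    (hlc x (subset_convexHull ℝ _ ⟨hx, hxu⟩)).trans hcu
  have hmax : ∀ y ∈ convexHull ℝ s, l y ≤ l u := fun y hy =>
    convexHull_min (t := {y | l y ≤ l u}) (fun x hx => show l x ≤ l u by
      rcases eq_or_ne x u with rfl | hxu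
      exacts [le_rfl, (hls x hx hxu).le]) (convex_halfSpace_le l.toLinearMap.isLinear (l u)) hy
  have hexp : IsExposed ℝ (convexHull ℝ s) (l.toExposed (convexHull ℝ s)) :=
    ContinuousLinearMap.toExposed.isExposed
  -- Krein–Milman: the face is the closed hull of its extreme points, which are points of `s`
  -- maximizing `l`, hence equal to `u`.
  have hface : l.toExposed (convexHull ℝ s) ⊆ {u} := by
    have hK := hexp.isCompact (hs.isCompact_convexHull ℝ)
    rw [← closure_convexHull_extremePoints hK (hexp.convex (convex_convexHull ℝ s))]
    refine closure_minimal (convexHull_min ?_ (convex_singleton u)) isClosed_singleton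
    intro x hx
    by_contra hxu
    exact (hls x (extremePoints_convexHull_subset
      (hexp.isExtreme.extremePoints_subset_extremePoints hx)) hxu).not_ge
      (hx.1.2 u (subset_convexHull ℝ s hus))
  exact ⟨hu.1, l, fun y hy =>
    ⟨hmax y hy, fun h => hface ⟨hy, fun z hz => (hmax z hz).trans h⟩⟩⟩

end LocallyConvex

theorem stmt4_general {n : ℕ} (A B : Finset (Fin n → ℝ)) (hB : B.Nonempty) :
    ∀ u ∈ Set.extremePoints ℝ (convexHull ℝ (A : Set (Fin n → ℝ))),
      ∃ v ∈ Set.extremePoints ℝ (convexHull ℝ (B : Set (Fin n → ℝ))),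
        (u + v) ∈ Set.extremePoints ℝ
            (convexHull ℝ ((A : Set (Fin n → ℝ)) + (B : Set (Fin n → ℝ)))) ∧
        ∀ a' ∈ convexHull ℝ (A : Set (Fin n → ℝ)),
          ∀ b' ∈ convexHull ℝ (B : Set (Fin n → ℝ)),
            a' + b' = u + v → a' = u ∧ b' = v := by
  intro u hu
  obtain ⟨-, l, hl⟩ := A.finite_toSet.extremePoints_convexHull_subset_exposedPoints hu
  obtain ⟨v, hv, hvmax⟩ := (B.finite_toSet.isCompact_convexHull ℝ).exists_mem_extremePoints_isMaxOn
    (Finset.coe_nonempty.2 hB).convexHull l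
  have huniq : ∀ a' ∈ convexHull ℝ (A : Set (Fin n → ℝ)),
      ∀ b' ∈ convexHull ℝ (B : Set (Fin n → ℝ)), a' + b' = u + v → a' = u ∧ b' = v := by
    intro a' ha' b' hb' hsum
    have hl_sum : l a' + l b' = l u + l v := by rw [← map_add, hsum, map_add]
    have ha'u : a' = u := (hl a' ha').2 (by linarith [(hl a' ha').1, isMaxOn_iff.1 hvmax b' hb'])
    exact ⟨ha'u, add_left_cancel (ha'u ▸ hsum)⟩
  refine ⟨v, hv, ?_, huniq⟩
  rw [convexHull_add]
  exact add_mem_extremePoints_add_of_unique (convex_convexHull ℝ _) (convex_convexHull ℝ _) hu hv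
    huniq

/-- For nonempty finite `A, B ⊆ ℝⁿ`: for every extreme point `u` of `conv(A)` there is an
extreme point `v` of `conv(B)` such that `u + v` is an extreme point of `conv(A + B)`,
and `u + v` has no other representation as `a' + b'` with `a' ∈ conv(A)`, `b' ∈ conv(B)`. -/
theorem stmt4 {n : ℕ} (A B : Finset (Fin n → ℝ)) (hA : A.Nonempty) (hB : B.Nonempty) :
    ∀ u ∈ Set.extremePoints ℝ (convexHull ℝ (A : Set (Fin n → ℝ))),
      ∃ v ∈ Set.extremePoints ℝ (convexHull ℝ (B : Set (Fin n → ℝ))),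
        (u + v) ∈ Set.extremePoints ℝ
            (convexHull ℝ ((A : Set (Fin n → ℝ)) + (B : Set (Fin n → ℝ)))) ∧
        ∀ a' ∈ convexHull ℝ (A : Set (Fin n → ℝ)),
          ∀ b' ∈ convexHull ℝ (B : Set (Fin n → ℝ)),
            a' + b' = u + v → a' = u ∧ b' = v :=
  stmt4_general A B hB
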